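/- Let f ∈ F₁(a,b) and let Γ ⊂ M_b(Ω) be nonempty. Then (i) the map (Q,P) ↦ D_f^Γ(Q‖P) is convex on pairs of probability measures on (Ω,M), i.e., for t ∈ [0,1], D_f^Γ(tQ₁+(1−t)Q₀ ‖ tP₁+(1−t)P₀) ≤ t·D_f^Γ(Q₁‖P₁) + (1−t)·D_f^Γ(Q₀‖P₀); and (ii) if Γ contains a constant function then D_f^Γ(Q‖P) ≥ 0 for all probability measures Q, P. -/

import Mathlib

open MeasureTheory Filter Set Topology ENNReal
open scoped Classical

noncomputable section

/-- The set of bounded measurable real-valued functions on `Ω`. -/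
def Mb (Ω : Type*) [MeasurableSpace Ω] : Set (Ω → ℝ) :=
  {g | Measurable g ∧ ∃ C : ℝ, ∀ x, |g x| ≤ C}

/-- The set of bounded continuous real-valued functions on `S`. -/
def Cb (S : Type*) [TopologicalSpace S] : Set (S → ℝ) :=
  {g | Continuous g ∧ ∃ C : ℝ, ∀ x, |g x| ≤ C}

/-- The positive part of an extended real number, as an element of `ℝ≥0∞`. -/
def posE (x : EReal) : ℝ≥0∞ := if x = ⊤ then ⊤ else ENNReal.ofReal x.toReal

/-- The extended-real-valued integral of an `EReal`-valued function, defined as the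
difference of the lower integrals of the positive and negative parts, with the
convention `∞ - ∞ = -∞`. -/
def eIntegral {Ω : Type*} [MeasurableSpace Ω] (P : Measure Ω) (h : Ω → EReal) : EReal :=
  ((∫⁻ x, posE (h x) ∂P : ℝ≥0∞) : EReal) - ((∫⁻ x, posE (-(h x)) ∂P : ℝ≥0∞) : EReal)

/-- The Legendre transform `f*(y) = sup_x {x*y - f(x)}` of `f : ℝ → (-∞,∞]`. -/
def fstar (f : ℝ → EReal) (y : ℝ) : EReal := ⨆ x : ℝ, (((x * y : ℝ) : EReal) - f x)

/-- `f : ℝ → (-∞,∞]` is (the convex LSC extension of) an element of `F₁(a,b)`: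
convex, lower semicontinuous, never `-∞`, finite exactly on the interval `(a,b)`
(with `+∞` strictly outside `[a,b]`), and `f(1) = 0` with `a < 1 < b`. -/
structure IsF1 (a b : EReal) (f : ℝ → EReal) : Prop where
  a_lt_one : a < ((1 : ℝ) : EReal)
  one_lt_b : ((1 : ℝ) : EReal) < b
  convex : ∀ x y t : ℝ, 0 < t → t < 1 →
    f (t * x + (1 - t) * y) ≤ ((t : ℝ) : EReal) * f x + (((1 - t : ℝ)) : EReal) * f y
  lsc : LowerSemicontinuous f
  ne_bot : ∀ x, f x ≠ ⊥
  finite_on : ∀ x : ℝ, a < (x : EReal) → (x : EReal) < b → f x ≠ ⊤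
  top_outside : ∀ x : ℝ, ((x : EReal) < a ∨ b < (x : EReal)) → f x = ⊤
  at_one : f 1 = 0

/-- `Λ_f^P[g] = inf_{ν ∈ ℝ} {ν + E_P[f*(g - ν)]}`. -/
def LambdaF {Ω : Type*} [MeasurableSpace Ω] (f : ℝ → EReal) (P : Measure Ω) (g : Ω → ℝ) :
    EReal :=
  ⨅ ν : ℝ, ((ν : EReal) + eIntegral P (fun x => fstar f (g x - ν)))

/-- The classical `f`-divergence `D_f(Q‖P) = E_P[f(dQ/dP)]` if `Q ≪ P`, else `∞`. -/
def fDivE {Ω : Type*} [MeasurableSpace Ω] (f : ℝ → EReal) (Q P : Measure Ω) : EReal :=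
  if Q ≪ P then eIntegral P (fun x => f ((Q.rnDeriv P x).toReal)) else ⊤

/-- The `(f,Γ)`-divergence `D_f^Γ(Q‖P) = sup_{g ∈ Γ} {E_Q[g] - Λ_f^P[g]}`. -/
def fGammaDiv {Ω : Type*} [MeasurableSpace Ω] (f : ℝ → EReal) (Γ : Set (Ω → ℝ))
    (Q P : Measure Ω) : EReal :=
  ⨆ g ∈ Γ, (((∫ x, g x ∂Q : ℝ) : EReal) - LambdaF f P g)

/-- The `Γ`-IPM `W^Γ(Q,P) = sup_{g ∈ Γ} {E_Q[g] - E_P[g]}`. -/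
def ipmW {Ω : Type*} [MeasurableSpace Ω] (Γ : Set (Ω → ℝ)) (Q P : Measure Ω) : EReal :=
  ⨆ g ∈ Γ, (((∫ x, g x ∂Q : ℝ) : EReal) - ((∫ x, g x ∂P : ℝ) : EReal))

end

/-!
For fixed `g`, `Q ↦ E_Q[g]` is affine and `P ↦ Λ_f^P[g]` is concave: it is an infimum over `ν`
of maps affine in `P`, since the extended integral `eIntegral` is additive and positively
homogeneous in the measure. Since `f*(y) ≥ y`, also `Λ_f^P[g] ≥ E_P[g] > -∞`, which keeps the
`EReal` arithmetic away from `⊥ + ⊤`; so `D_f^Γ` is a supremum of jointly convex maps.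
For nonnegativity, a subgradient `y` of `f` at `1` gives `f*(y) = y`, hence
`Λ_f^P[c] ≤ (c - y) + y = c` for every constant `c`.
-/

lemma posE_coe (r : ℝ) : posE r = ENNReal.ofReal r := by
  simp [posE]

lemma posE_mono : Monotone posE := by
  intro x y hxy
  rcases eq_or_ne y ⊤ with rfl | hy
  · simp [posE]
  rcases eq_or_ne x ⊥ with rfl | hx
  · simp [posE, hy]
  have hx' : x ≠ ⊤ := (hxy.trans_lt (lt_top_iff_ne_top.2 hy)).ne
  simp only [posE, if_neg hx', if_neg hy]
  exact ENNReal.ofReal_le_ofReal (EReal.toReal_le_toReal hxy hx hy)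

section eIntegral

variable {Ω : Type*} [MeasurableSpace Ω]

lemma eIntegral_mono {P : Measure Ω} {h₁ h₂ : Ω → EReal} (h : ∀ x, h₁ x ≤ h₂ x) :
    eIntegral P h₁ ≤ eIntegral P h₂ :=
  EReal.sub_le_sub
    (EReal.coe_ennreal_le_coe_ennreal_iff.2 (lintegral_mono fun x => posE_mono (h x)))
    (EReal.coe_ennreal_le_coe_ennreal_iff.2
      (lintegral_mono fun x => posE_mono (EReal.neg_le_neg_iff.2 (h x))))

lemma eIntegral_coe {P : Measure Ω} {c : Ω → ℝ} (hc : Integrable c P) :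
    eIntegral P (fun x => (c x : EReal)) = ((∫ x, c x ∂P : ℝ) : EReal) := by
  have hpos := (lintegral_ofReal_le_lintegral_enorm c).trans_lt hc.2
  have hneg : ∫⁻ x, ENNReal.ofReal (-c x) ∂P < ⊤ :=
    (lintegral_ofReal_le_lintegral_enorm (-c)).trans_lt hc.neg.2
  simp only [eIntegral, posE_coe, ← EReal.coe_neg]
  rw [integral_eq_lintegral_pos_part_sub_lintegral_neg_part hc, EReal.coe_sub,
    EReal.coe_ennreal_toReal hpos.ne, EReal.coe_ennreal_toReal hneg.ne]

lemma eIntegral_add_measure (μ ν : Measure Ω) (h : Ω → EReal) :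
    eIntegral (μ + ν) h = eIntegral μ h + eIntegral ν h := by
  simp only [eIntegral, lintegral_add_measure, EReal.coe_ennreal_add]
  exact EReal.add_sub_add_comm (.inl (EReal.coe_ennreal_ne_bot _))
    (.inr (EReal.coe_ennreal_ne_bot _))

lemma eIntegral_smul_measure {c : ℝ≥0∞} (hc : c ≠ ⊤) (μ : Measure Ω) (h : Ω → EReal) :
    eIntegral (c • μ) h = c * eIntegral μ h := by
  simp only [eIntegral, lintegral_smul_measure, smul_eq_mul, EReal.coe_ennreal_mul]
  rw [EReal.mul_sub_of_nonneg_of_ne_top (EReal.coe_ennreal_nonneg c) (by simpa using hc)]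

end eIntegral

lemma coe_le_fstar {f : ℝ → EReal} (h1 : f 1 = 0) (y : ℝ) : (y : EReal) ≤ fstar f y := by
  simpa [fstar, h1] using le_iSup (fun x : ℝ => ((x * y : ℝ) : EReal) - f x) 1

lemma fstar_eq_self_of_subgradient {f : ℝ → EReal} (h1 : f 1 = 0) {y : ℝ}
    (hy : ∀ x, ((y * (x - 1) : ℝ) : EReal) ≤ f x) : fstar f y = y := by
  refine le_antisymm (iSup_le fun x => ?_) (coe_le_fstar h1 y)
  calc ((x * y : ℝ) : EReal) - f x ≤ ((x * y : ℝ) : EReal) - ((y * (x - 1) : ℝ) : EReal) :=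
        EReal.sub_le_sub le_rfl (hy x)
    _ = y := by rw [← EReal.coe_sub]; ring_nf

section LambdaF

variable {Ω : Type*} [MeasurableSpace Ω] {f : ℝ → EReal}

lemma coe_integral_le_LambdaF (h1 : f 1 = 0) (P : Measure Ω) [IsProbabilityMeasure P]
    {g : Ω → ℝ} (hg : Integrable g P) : ((∫ x, g x ∂P : ℝ) : EReal) ≤ LambdaF f P g := by
  refine le_iInf fun ν => ?_
  have hshift : Integrable (fun x => g x - ν) P := hg.sub (integrable_const ν)
  calc ((∫ x, g x ∂P : ℝ) : EReal) = ν + ((∫ x, (g x - ν) ∂P : ℝ) : EReal) := by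
        rw [integral_sub hg (integrable_const ν), integral_const, probReal_univ, one_smul,
          ← EReal.coe_add, add_sub_cancel]
    _ = ν + eIntegral P (fun x => ((g x - ν : ℝ) : EReal)) := by rw [eIntegral_coe hshift]
    _ ≤ ν + eIntegral P (fun x => fstar f (g x - ν)) :=
        add_le_add le_rfl (eIntegral_mono fun x => coe_le_fstar h1 _)

lemma LambdaF_ne_bot (h1 : f 1 = 0) (P : Measure Ω) [IsProbabilityMeasure P]
    {g : Ω → ℝ} (hg : Integrable g P) : LambdaF f P g ≠ ⊥ :=
  ne_bot_of_le_ne_bot (EReal.coe_ne_bot _) (coe_integral_le_LambdaF h1 P hg)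

lemma LambdaF_const_le_of_subgradient (h1 : f 1 = 0) {y : ℝ}
    (hy : ∀ x, ((y * (x - 1) : ℝ) : EReal) ≤ f x) (P : Measure Ω) [IsProbabilityMeasure P]
    (c : ℝ) : LambdaF f P (fun _ => c) ≤ c :=
  calc LambdaF f P (fun _ => c)
      ≤ ((c - y : ℝ) : EReal) + eIntegral P (fun _ => fstar f (c - (c - y))) := iInf_le _ (c - y)
    _ = c := by
        rw [_root_.sub_sub_cancel, fstar_eq_self_of_subgradient h1 hy,
          eIntegral_coe (integrable_const y), integral_const, probReal_univ, one_smul, ← EReal.coe_add, sub_add_cancel]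

lemma mul_LambdaF_add_mul_LambdaF_le {t s : ℝ} (ht : 0 ≤ t) (hs : 0 ≤ s) (hts : t + s = 1)
    (P₁ P₀ : Measure Ω) (g : Ω → ℝ) :
    (t : EReal) * LambdaF f P₁ g + (s : EReal) * LambdaF f P₀ g
      ≤ LambdaF f (ENNReal.ofReal t • P₁ + ENNReal.ofReal s • P₀) g := by
  refine le_iInf fun ν => ?_
  have hcoe : ∀ {r : ℝ}, 0 ≤ r → ((ENNReal.ofReal r : ℝ≥0∞) : EReal) = r := fun hr => by
    rw [EReal.coe_ennreal_ofReal, max_eq_left hr]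
  set E : Measure Ω → EReal := fun P => eIntegral P (fun x => fstar f (g x - ν))
  calc (t : EReal) * LambdaF f P₁ g + (s : EReal) * LambdaF f P₀ g
      ≤ t * (ν + E P₁) + s * (ν + E P₀) := by gcongr <;> exact iInf_le _ ν
    _ = ((t * ν + s * ν : ℝ) : EReal) + (t * E P₁ + s * E P₀) := by
        rw [EReal.left_distrib_of_nonneg_of_ne_top (EReal.coe_nonneg.2 ht) (EReal.coe_ne_top t),
          EReal.left_distrib_of_nonneg_of_ne_top (EReal.coe_nonneg.2 hs) (EReal.coe_ne_top s),
          add_add_add_comm, EReal.coe_add, EReal.coe_mul, EReal.coe_mul]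
    _ = ν + E (ENNReal.ofReal t • P₁ + ENNReal.ofReal s • P₀) := by
        simp only [E, eIntegral_add_measure, eIntegral_smul_measure ENNReal.ofReal_ne_top,
          hcoe ht, hcoe hs, ← add_mul, hts, one_mul]

end LambdaF

lemma ConvexOn.add_rightDeriv_mul_le {S : Set ℝ} {F : ℝ → ℝ} (hF : ConvexOn ℝ S F) {x₀ x : ℝ}
    (hx₀ : x₀ ∈ interior S) (hx : x ∈ S) :
    F x₀ + derivWithin F (Ioi x₀) x₀ * (x - x₀) ≤ F x := by
  rcases lt_trichotomy x x₀ with hlt | rfl | hgt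
  · have hslope := (hF.slope_le_leftDeriv_of_mem_interior hx hx₀ hlt).trans
      (hF.leftDeriv_le_rightDeriv_of_mem_interior hx₀)
    rw [slope_def_field, div_le_iff₀ (sub_pos.2 hlt)] at hslope
    nlinarith
  · simp
  · have hslope := hF.rightDeriv_le_slope_of_mem_interior hx₀ hx hgt
    rw [slope_def_field, le_div_iff₀ (sub_pos.2 hgt)] at hslope
    linarith

namespace IsF1

variable {a b : EReal} {f : ℝ → EReal}

lemma convexOn_toReal (hf : IsF1 a b f) :
    ConvexOn ℝ {x | f x ≠ ⊤} (fun x => (f x).toReal) := by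
  have hcomb : ∀ ⦃x⦄, f x ≠ ⊤ → ∀ ⦃y⦄, f y ≠ ⊤ → ∀ ⦃t s : ℝ⦄, 0 < t → 0 < s → t + s = 1 →
      f (t • x + s • y) ≤ ((t * (f x).toReal + s * (f y).toReal : ℝ) : EReal) := by
    intro x hx y hy t s ht hs hts
    obtain rfl : s = 1 - t := by linarith
    have h := hf.convex x y t ht (by linarith)
    rwa [← EReal.coe_toReal hx (hf.ne_bot x), ← EReal.coe_toReal hy (hf.ne_bot y),
      ← EReal.coe_mul, ← EReal.coe_mul, ← EReal.coe_add] at h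
  refine convexOn_iff_forall_pos.2 ⟨convex_iff_forall_pos.2 ?_, ?_⟩
  · intro x hx y hy t s ht hs hts
    exact ne_top_of_le_ne_top (EReal.coe_ne_top _) (hcomb hx hy ht hs hts)
  · intro x hx y hy t s ht hs hts
    have h := hcomb hx hy ht hs hts
    rw [← EReal.coe_toReal (ne_top_of_le_ne_top (EReal.coe_ne_top _) h) (hf.ne_bot _),
      EReal.coe_le_coe_iff] at h
    simpa only [smul_eq_mul] using h

lemma one_mem_interior (hf : IsF1 a b f) : (1 : ℝ) ∈ interior {x | f x ≠ ⊤} := by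
  have hopen : IsOpen {x : ℝ | a < x ∧ x < b} :=
    (isOpen_lt continuous_const continuous_coe_real_ereal).inter
      (isOpen_lt continuous_coe_real_ereal continuous_const)
  exact interior_maximal (fun x hx => hf.finite_on x hx.1 hx.2) hopen
    ⟨hf.a_lt_one, hf.one_lt_b⟩

lemma exists_subgradient (hf : IsF1 a b f) :
    ∃ y : ℝ, ∀ x, ((y * (x - 1) : ℝ) : EReal) ≤ f x := by
  refine ⟨derivWithin (fun x => (f x).toReal) (Ioi 1) 1, fun x => ?_⟩
  rcases eq_or_ne (f x) ⊤ with hx | hx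
  · simp [hx]
  have h := hf.convexOn_toReal.add_rightDeriv_mul_le hf.one_mem_interior hx
  rw [hf.at_one, EReal.toReal_zero, zero_add] at h
  rw [← EReal.coe_toReal hx (hf.ne_bot x)]
  exact EReal.coe_le_coe_iff.2 h

end IsF1

section fGammaDiv

variable {Ω : Type*} [MeasurableSpace Ω] {f : ℝ → EReal} {Γ : Set (Ω → ℝ)}

lemma integrable_of_mem_Mb {g : Ω → ℝ} (hg : g ∈ Mb Ω) (μ : Measure Ω) [IsFiniteMeasure μ] :
    Integrable g μ := by
  obtain ⟨hmeas, C, hC⟩ := hg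
  exact .of_bound hmeas.aestronglyMeasurable C (ae_of_all _ hC)

lemma sub_LambdaF_le_fGammaDiv {g : Ω → ℝ} (hg : g ∈ Γ) (Q P : Measure Ω) :
    ((∫ x, g x ∂Q : ℝ) : EReal) - LambdaF f P g ≤ fGammaDiv f Γ Q P :=
  le_iSup₂ (f := fun g _ => ((∫ x, g x ∂Q : ℝ) : EReal) - LambdaF f P g) g hg

theorem fGammaDiv_convexCombination_le (h1 : f 1 = 0) (hΓ : Γ ⊆ Mb Ω)
    {Q₀ Q₁ P₀ P₁ : Measure Ω} [IsFiniteMeasure Q₀] [IsFiniteMeasure Q₁]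
    [IsProbabilityMeasure P₀] [IsProbabilityMeasure P₁]
    {t s : ℝ} (ht : 0 ≤ t) (hs : 0 ≤ s) (hts : t + s = 1) :
    fGammaDiv f Γ (ENNReal.ofReal t • Q₁ + ENNReal.ofReal s • Q₀)
        (ENNReal.ofReal t • P₁ + ENNReal.ofReal s • P₀)
      ≤ (t : EReal) * fGammaDiv f Γ Q₁ P₁ + (s : EReal) * fGammaDiv f Γ Q₀ P₀ := by
  refine iSup₂_le fun g hg => ?_
  have hint : ∫ x, g x ∂(ENNReal.ofReal t • Q₁ + ENNReal.ofReal s • Q₀)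
      = t * ∫ x, g x ∂Q₁ + s * ∫ x, g x ∂Q₀ := by
    rw [integral_add_measure ((integrable_of_mem_Mb (hΓ hg) Q₁).smul_measure ENNReal.ofReal_ne_top)
        ((integrable_of_mem_Mb (hΓ hg) Q₀).smul_measure ENNReal.ofReal_ne_top),
      integral_smul_measure, integral_smul_measure, ENNReal.toReal_ofReal ht,
      ENNReal.toReal_ofReal hs, smul_eq_mul, smul_eq_mul]
  have hΛ : ∀ (r : ℝ) (P : Measure Ω) [IsProbabilityMeasure P], 0 ≤ r →
      (r : EReal) * LambdaF f P g ≠ ⊥ := fun r P _ hr =>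
    (EReal.mul_ne_bot _ _).2 ⟨.inl (EReal.coe_ne_bot r),
      .inr (LambdaF_ne_bot h1 P (integrable_of_mem_Mb (hΓ hg) P)), .inl (EReal.coe_ne_top r),
      .inl (EReal.coe_nonneg.2 hr)⟩
  calc ((∫ x, g x ∂(ENNReal.ofReal t • Q₁ + ENNReal.ofReal s • Q₀) : ℝ) : EReal)
        - LambdaF f (ENNReal.ofReal t • P₁ + ENNReal.ofReal s • P₀) g
      ≤ (((t * ∫ x, g x ∂Q₁ : ℝ) : EReal) + ((s * ∫ x, g x ∂Q₀ : ℝ) : EReal))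
        - ((t : EReal) * LambdaF f P₁ g + (s : EReal) * LambdaF f P₀ g) := by
        rw [hint, EReal.coe_add]
        exact EReal.sub_le_sub le_rfl (mul_LambdaF_add_mul_LambdaF_le ht hs hts P₁ P₀ g)
    _ = (t : EReal) * (((∫ x, g x ∂Q₁ : ℝ) : EReal) - LambdaF f P₁ g)
        + (s : EReal) * (((∫ x, g x ∂Q₀ : ℝ) : EReal) - LambdaF f P₀ g) := by
        rw [EReal.add_sub_add_comm (.inl (hΛ t P₁ ht)) (.inr (hΛ s P₀ hs)),
          EReal.mul_sub_of_nonneg_of_ne_top (EReal.coe_nonneg.2 ht) (EReal.coe_ne_top t),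
          EReal.mul_sub_of_nonneg_of_ne_top (EReal.coe_nonneg.2 hs) (EReal.coe_ne_top s),
          EReal.coe_mul, EReal.coe_mul]
    _ ≤ (t : EReal) * fGammaDiv f Γ Q₁ P₁ + (s : EReal) * fGammaDiv f Γ Q₀ P₀ := by
        gcongr <;> exact sub_LambdaF_le_fGammaDiv hg _ _

theorem fGammaDiv_nonneg {a b : EReal} (hf : IsF1 a b f) {c : ℝ} (hc : (fun _ => c) ∈ Γ)
    (Q P : Measure Ω) [IsProbabilityMeasure Q] [IsProbabilityMeasure P] :
    0 ≤ fGammaDiv f Γ Q P := by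
  obtain ⟨y, hy⟩ := hf.exists_subgradient
  refine le_trans ?_ (sub_LambdaF_le_fGammaDiv hc Q P)
  rw [integral_const, probReal_univ, one_smul, EReal.sub_nonneg (.inl (EReal.coe_ne_top c))
    (.inl (EReal.coe_ne_bot c))]
  exact LambdaF_const_le_of_subgradient hf.at_one hy P c

end fGammaDiv

theorem stmt8_general {Ω : Type*} [MeasurableSpace Ω] (a b : EReal) (f : ℝ → EReal)
    (hf : IsF1 a b f)
    (Γ : Set (Ω → ℝ)) (hΓ : Γ ⊆ Mb Ω) :
    (∀ (Q₀ Q₁ P₀ P₁ : Measure Ω), IsProbabilityMeasure Q₀ → IsProbabilityMeasure Q₁ →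
      IsProbabilityMeasure P₀ → IsProbabilityMeasure P₁ → ∀ t : ℝ, 0 ≤ t → t ≤ 1 →
      fGammaDiv f Γ (ENNReal.ofReal t • Q₁ + ENNReal.ofReal (1 - t) • Q₀)
          (ENNReal.ofReal t • P₁ + ENNReal.ofReal (1 - t) • P₀)
        ≤ ((t : ℝ) : EReal) * fGammaDiv f Γ Q₁ P₁
          + (((1 - t : ℝ)) : EReal) * fGammaDiv f Γ Q₀ P₀)
    ∧ ((∃ c : ℝ, (fun _ => c) ∈ Γ) →
      ∀ (Q P : Measure Ω), IsProbabilityMeasure Q → IsProbabilityMeasure P →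
        0 ≤ fGammaDiv f Γ Q P) := by
  refine ⟨fun Q₀ Q₁ P₀ P₁ _ _ _ _ t ht₀ ht₁ => ?_, fun ⟨c, hc⟩ Q P _ _ => ?_⟩
  · exact fGammaDiv_convexCombination_le hf.at_one hΓ ht₀ (sub_nonneg.2 ht₁)
      (add_sub_cancel t 1)
  · exact fGammaDiv_nonneg hf hc Q P

/-- For `f ∈ F₁(a,b)` and nonempty `Γ ⊆ M_b(Ω)`: (i) the map
`(Q,P) ↦ D_f^Γ(Q‖P)` is jointly convex on pairs of probability measures; (ii) if `Γ`
contains a constant function then `D_f^Γ(Q‖P) ≥ 0` for all probability measures `Q, P`. -/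
theorem stmt8 {Ω : Type*} [MeasurableSpace Ω] (a b : EReal) (f : ℝ → EReal)
    (hf : IsF1 a b f)
    (Γ : Set (Ω → ℝ)) (hΓ : Γ ⊆ Mb Ω) (hne : Γ.Nonempty) :
    (∀ (Q₀ Q₁ P₀ P₁ : Measure Ω), IsProbabilityMeasure Q₀ → IsProbabilityMeasure Q₁ →
      IsProbabilityMeasure P₀ → IsProbabilityMeasure P₁ → ∀ t : ℝ, 0 ≤ t → t ≤ 1 →
      fGammaDiv f Γ (ENNReal.ofReal t • Q₁ + ENNReal.ofReal (1 - t) • Q₀)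
          (ENNReal.ofReal t • P₁ + ENNReal.ofReal (1 - t) • P₀)
        ≤ ((t : ℝ) : EReal) * fGammaDiv f Γ Q₁ P₁
          + (((1 - t : ℝ)) : EReal) * fGammaDiv f Γ Q₀ P₀)
    ∧ ((∃ c : ℝ, (fun _ => c) ∈ Γ) →
      ∀ (Q P : Measure Ω), IsProbabilityMeasure Q → IsProbabilityMeasure P →
        0 ≤ fGammaDiv f Γ Q P) :=
  stmt8_general a b f hf Γ hΓ
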